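/- arXiv:1504.00834 — 2 statements merged into one kernel-verified Lean document; each statement's English description precedes it below -/
import Mathlib

section
/- There exist positive constants α ≤ 1 and γ ≤ 1 such that for every h there is a 0-1 matrix M (not necessarily Toeplitz) of height h and width α·h·log₂ h such that the Shannon entropy of Mv is at least γ·h·log₂ h, where v is a uniformly random 0-1 column vector of length α·h·log₂ h. -/
/-- Shannon entropy (in bits) of the output of `f` when its input is uniform on `α`. -/
noncomputable def uniformEntropy {α β : Type*} [Fintype α] [DecidableEq β] (f : α → β) : ℝ :=
  - ∑ y ∈ Finset.univ.image f,
      (((Finset.univ.filter fun a => f a = y).card : ℝ) / (Fintype.card α)) *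
        Real.logb 2 (((Finset.univ.filter fun a => f a = y).card : ℝ) / (Fintype.card α))

/-!
Call `A : κ → Finset ι` detecting if `weigh A : v ↦ (#(A i ∩ v))ᵢ` is injective. If the rows of a
0-1 matrix `M` restricted to `m` of its `w` columns form a detecting family, then `Mv` determines
`m` of the `w` fair coins `v`, so every fibre of `v ↦ Mv` has at most `2 ^ (w - m)` points and the
entropy of `Mv` is at least `m`.

Detecting families with `h` rows and `m ≍ h log₂ h` columns exist by the Erdős–Rényi counting
argument. A family is not detecting iff some nonzero `t ∈ {-1, 0, 1}^m`, written as a disjoint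
pair `(P, N)`, is orthogonal to all its rows. A uniform random row is orthogonal to `t` with
probability at most `1/2`, and at most `C(k, #N) / 2 ^ k ≤ 2 / √(k + 1)` if `t` has support
size `k`. Split at `K = √h`: the at most `(m + 1) ^ (2K)` pairs of small support contribute at
most `(m + 1) ^ (2K) / 2 ^ h`, the at most `4 ^ m` others at most `4 ^ m (4 / (K + 2)) ^ (h / 2)`,
and both are below `1/4` when `m ≤ h log₂ h / 100` and `h ≥ 2 ^ 24`. Smaller `h` are covered by
the identity matrix.
-/

open Finset Real
open scoped Matrix

theorem Nat.centralBinom_sq_mul_le (n : ℕ) : n.centralBinom ^ 2 * (2 * n + 1) ≤ 16 ^ n := by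
  induction n with
  | zero => simp
  | succ n ih =>
    refine Nat.le_of_mul_le_mul_left (c := (n + 1) ^ 2) ?_ (by positivity)
    calc (n + 1) ^ 2 * ((n + 1).centralBinom ^ 2 * (2 * (n + 1) + 1))
        = ((n + 1) * (n + 1).centralBinom) ^ 2 * (2 * n + 3) := by ring
      _ = 4 * ((2 * n + 1) * (2 * n + 3)) * (n.centralBinom ^ 2 * (2 * n + 1)) := by
          rw [Nat.succ_mul_centralBinom_succ]; ring
      _ ≤ 4 * (2 * n + 2) ^ 2 * 16 ^ n := by gcongr; nlinarith
      _ = (n + 1) ^ 2 * 16 ^ (n + 1) := by ring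

theorem Nat.choose_sq_mul_succ_le (k q : ℕ) : k.choose q ^ 2 * (k + 1) ≤ 4 ^ (k + 1) := by
  set n := (k + 1) / 2
  have hk : k ≤ 2 * n := by omega
  calc k.choose q ^ 2 * (k + 1) ≤ n.centralBinom ^ 2 * (2 * n + 1) := by
        gcongr
        exact (Nat.choose_le_choose q hk).trans (Nat.choose_le_centralBinom q n)
    _ ≤ 16 ^ n := Nat.centralBinom_sq_mul_le n
    _ = 4 ^ (2 * n) := by rw [pow_mul]; norm_num
    _ ≤ 4 ^ (k + 1) := Nat.pow_le_pow_right (by norm_num) (by omega)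

section Weighing

variable {ι κ : Type*} [Fintype ι] [DecidableEq ι]

def weigh (A : κ → Finset ι) (v : Finset ι) : κ → ℕ := fun i => #(A i ∩ v)

def balanced (P N : Finset ι) : Finset (Finset ι) := {r | #(r ∩ P) = #(r ∩ N)}

theorem card_balanced_le {P N : Finset ι} (hPN : Disjoint P N) :
    #(balanced P N) ≤ 2 ^ (Fintype.card ι - #(P ∪ N)) * (#(P ∪ N)).choose #N := by
  set D := P ∪ N
  -- `r` is balanced iff `(r ∩ P) ∪ (N \ r)` has size `#N`, and `r` is recovered from it and `r \ D`
  let encode (r : Finset ι) : Finset ι × Finset ι := (r \ D, (r ∩ P) ∪ (N \ r))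
  have hdecode (r : Finset ι) : r = (encode r).1 ∪ ((encode r).2 ∩ P) ∪ (N \ (encode r).2) := by
    ext j
    have := @Finset.disjoint_left.mp hPN j
    simp only [encode, D, mem_union, mem_sdiff, mem_inter]
    tauto
  have hmaps : ∀ r ∈ balanced P N, encode r ∈ Dᶜ.powerset ×ˢ D.powersetCard #N := by
    intro r hr
    simp only [balanced, mem_filter, mem_univ, true_and] at hr
    simp only [encode, mem_product, mem_powerset, mem_powersetCard]
    refine ⟨fun j => by simp [D], fun j => by simp [D]; tauto, ?_⟩
    rw [card_union_of_disjoint (disjoint_of_subset_left inter_subset_right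
      (disjoint_of_subset_right sdiff_subset hPN)), hr, inter_comm, card_inter_add_card_sdiff]
  calc #(balanced P N) ≤ #(Dᶜ.powerset ×ˢ D.powersetCard #N) :=
        card_le_card_of_injOn encode hmaps fun r _ s _ hrs => by
          rw [hdecode r, hdecode s, hrs]
    _ = 2 ^ (Fintype.card ι - #D) * (#D).choose #N := by
        rw [card_product, card_powerset, card_powersetCard, card_compl]

theorem two_mul_card_balanced_le {P N : Finset ι} (hPN : Disjoint P N) (hne : (P ∪ N).Nonempty) :
    2 * #(balanced P N) ≤ 2 ^ Fintype.card ι := by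
  obtain ⟨k, hk⟩ : ∃ k, #(P ∪ N) = k + 1 := Nat.exists_eq_add_one.mpr hne.card_pos
  have hD : k + 1 ≤ Fintype.card ι := hk ▸ card_le_univ _
  calc 2 * #(balanced P N) ≤ 2 * (2 ^ (Fintype.card ι - (k + 1)) * 2 ^ k) := by
        grw [card_balanced_le hPN, hk, Nat.choose_succ_le_two_pow]
    _ = 2 ^ (Fintype.card ι - (k + 1) + k + 1) := by ring
    _ = 2 ^ Fintype.card ι := by congr 1; omega

theorem card_balanced_sq_mul_le {P N : Finset ι} (hPN : Disjoint P N) :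
    #(balanced P N) ^ 2 * (#(P ∪ N) + 1) ≤ 4 ^ (Fintype.card ι + 1) := by
  have hD : #(P ∪ N) ≤ Fintype.card ι := card_le_univ _
  calc #(balanced P N) ^ 2 * (#(P ∪ N) + 1)
      ≤ (2 ^ (Fintype.card ι - #(P ∪ N)) * (#(P ∪ N)).choose #N) ^ 2 * (#(P ∪ N) + 1) := by
        grw [card_balanced_le hPN]
    _ = 4 ^ (Fintype.card ι - #(P ∪ N)) * ((#(P ∪ N)).choose #N ^ 2 * (#(P ∪ N) + 1)) := by
        rw [mul_pow, ← pow_mul, mul_comm _ 2, pow_mul]; ring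
    _ ≤ 4 ^ (Fintype.card ι - #(P ∪ N)) * 4 ^ (#(P ∪ N) + 1) := by
        grw [Nat.choose_sq_mul_succ_le]
    _ = 4 ^ (Fintype.card ι + 1) := by rw [← pow_add]; congr 1; omega

theorem exists_balanced_of_not_injective {A : κ → Finset ι} (hA : ¬ Function.Injective (weigh A)) :
    ∃ P N : Finset ι, Disjoint P N ∧ (P ∪ N).Nonempty ∧ ∀ i, A i ∈ balanced P N := by
  obtain ⟨u, v, huv, hne⟩ : ∃ u v, weigh A u = weigh A v ∧ u ≠ v := by
    simpa [Function.Injective] using hA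
  refine ⟨u \ v, v \ u, disjoint_sdiff_sdiff, ?_, fun i => ?_⟩
  · rw [nonempty_iff_ne_empty, Ne, union_eq_empty, sdiff_eq_empty_iff_subset,
      sdiff_eq_empty_iff_subset]
    exact fun h => hne (subset_antisymm h.1 h.2)
  · have hi := congr_fun huv i
    have hu := card_inter_add_card_sdiff (A i ∩ u) v
    have hv := card_inter_add_card_sdiff (A i ∩ v) u
    simp only [weigh] at hi
    simp only [balanced, mem_filter, mem_univ, true_and, ← inter_sdiff_assoc]
    rw [inter_right_comm] at hv
    omega

theorem card_filter_card_le_le (K : ℕ) :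
    #{S : Finset ι | #S ≤ K} ≤ (Fintype.card ι + 1) ^ K := by
  calc #{S : Finset ι | #S ≤ K}
      ≤ #((range (K + 1)).biUnion fun k => powersetCard k (univ : Finset ι)) :=
        card_le_card fun S hS => by
          simp only [mem_filter, mem_univ, true_and] at hS
          simp [hS]
    _ ≤ ∑ k ∈ range (K + 1), (Fintype.card ι).choose k := by
        grw [card_biUnion_le]; simp
    _ ≤ ∑ k ∈ range (K + 1), Fintype.card ι ^ k * 1 ^ (K - k) * K.choose k := by
        gcongr with k hk
        rw [one_pow, mul_one]
        exact (Nat.choose_le_pow _ _).trans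
          (Nat.le_mul_of_pos_right _ (Nat.choose_pos (by simpa [Nat.lt_succ_iff] using hk)))
    _ = (Fintype.card ι + 1) ^ K := (add_pow _ _ _).symm

theorem four_mul_sum_pow_card_balanced_le_of_card_le {n K : ℕ}
    (s : Finset (Finset ι × Finset ι))
    (hs : ∀ p ∈ s, Disjoint p.1 p.2 ∧ (p.1 ∪ p.2).Nonempty ∧ #(p.1 ∪ p.2) ≤ K)
    (hK : 4 * (Fintype.card ι + 1) ^ (2 * K) ≤ 2 ^ n) :
    4 * ∑ p ∈ s, #(balanced p.1 p.2) ^ n ≤ 2 ^ (Fintype.card ι * n) := by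
  set small : Finset (Finset ι) := {S | #S ≤ K}
  have hs_card : #s ≤ (Fintype.card ι + 1) ^ (2 * K) := by
    calc #s ≤ #(small ×ˢ small) :=
          card_le_card fun p hp => by
            have hp := (hs p hp).2.2
            simp only [small, mem_product, mem_filter, mem_univ, true_and]
            exact ⟨(card_le_card subset_union_left).trans hp,
              (card_le_card subset_union_right).trans hp⟩
      _ ≤ (Fintype.card ι + 1) ^ (2 * K) := by
          rw [card_product, pow_mul', sq]
          gcongr <;> exact card_filter_card_le_le K
  have hterm : ∀ p ∈ s, 2 ^ n * #(balanced p.1 p.2) ^ n ≤ 2 ^ (Fintype.card ι * n) := by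
    intro p hp
    rw [← mul_pow, pow_mul]
    exact Nat.pow_le_pow_left (two_mul_card_balanced_le (hs p hp).1 (hs p hp).2.1) n
  refine Nat.le_of_mul_le_mul_left (c := 2 ^ n) ?_ (by positivity)
  calc 2 ^ n * (4 * ∑ p ∈ s, #(balanced p.1 p.2) ^ n)
      = 4 * ∑ p ∈ s, 2 ^ n * #(balanced p.1 p.2) ^ n := by rw [mul_left_comm, mul_sum]
    _ ≤ 4 * (#s * 2 ^ (Fintype.card ι * n)) := by grw [sum_le_card_nsmul s _ _ hterm, smul_eq_mul]
    _ ≤ 2 ^ n * 2 ^ (Fintype.card ι * n) := by rw [← mul_assoc]; gcongr; omega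

theorem four_mul_sum_pow_card_balanced_le_of_lt_card {n K : ℕ}
    (s : Finset (Finset ι × Finset ι)) (hs : ∀ p ∈ s, Disjoint p.1 p.2 ∧ K < #(p.1 ∪ p.2))
    (hK : 16 * 16 ^ Fintype.card ι * 4 ^ n ≤ (K + 2) ^ n) :
    4 * ∑ p ∈ s, #(balanced p.1 p.2) ^ n ≤ 2 ^ (Fintype.card ι * n) := by
  set m := Fintype.card ι
  have hs_card : #s ≤ 4 ^ m := by
    grw [card_le_univ]
    simp [Fintype.card_finset, m, ← mul_pow]
  have hterm : ∀ p ∈ s, 4 * 4 ^ m * #(balanced p.1 p.2) ^ n ≤ 2 ^ (m * n) := by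
    intro p hp
    set R := #(balanced p.1 p.2)
    have hR := card_balanced_sq_mul_le (hs p hp).1
    refine (Nat.pow_le_pow_iff_left two_ne_zero).mp
      (Nat.le_of_mul_le_mul_left (c := (K + 2) ^ n) ?_ (by positivity))
    have h16 : (16 : ℕ) ^ m = (4 ^ m) ^ 2 := by rw [← pow_mul, mul_comm, pow_mul]; norm_num
    have h4 : (2 ^ (m * n)) ^ 2 = 4 ^ (m * n) := by rw [← pow_mul, mul_comm, pow_mul]; norm_num
    calc (K + 2) ^ n * (4 * 4 ^ m * R ^ n) ^ 2 = 16 * 16 ^ m * (R ^ 2 * (K + 2)) ^ n := by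
          rw [h16, mul_pow (R ^ 2)]; ring
      _ ≤ 16 * 16 ^ m * (4 ^ (m + 1)) ^ n := by
          gcongr
          calc R ^ 2 * (K + 2) ≤ R ^ 2 * (#(p.1 ∪ p.2) + 1) :=
              Nat.mul_le_mul_left _ (by have := (hs p hp).2; omega)
            _ ≤ 4 ^ (m + 1) := hR
      _ = 16 * 16 ^ m * 4 ^ n * 4 ^ (m * n) := by ring
      _ ≤ (K + 2) ^ n * (2 ^ (m * n)) ^ 2 := by rw [h4]; gcongr
  refine Nat.le_of_mul_le_mul_left (c := 4 ^ m) ?_ (by positivity)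
  calc 4 ^ m * (4 * ∑ p ∈ s, #(balanced p.1 p.2) ^ n)
      = ∑ p ∈ s, 4 * 4 ^ m * #(balanced p.1 p.2) ^ n := by
        rw [mul_sum, mul_sum]; exact sum_congr rfl fun _ _ => by ring
    _ ≤ #s * 2 ^ (m * n) := by grw [sum_le_card_nsmul s _ _ hterm, smul_eq_mul]
    _ ≤ 4 ^ m * 2 ^ (m * n) := by gcongr

theorem exists_injective_weigh [Fintype κ] (K : ℕ)
    (hsmall : 4 * (Fintype.card ι + 1) ^ (2 * K) ≤ 2 ^ Fintype.card κ)
    (hlarge : 16 * 16 ^ Fintype.card ι * 4 ^ Fintype.card κ ≤ (K + 2) ^ Fintype.card κ) :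
    ∃ A : κ → Finset ι, Function.Injective (weigh A) := by
  classical
  by_contra! hbad
  set T : Finset (Finset ι × Finset ι) := {p | Disjoint p.1 p.2 ∧ (p.1 ∪ p.2).Nonempty}
  -- union bound over the pairs `(P, N)` witnessing that a family is not detecting
  have hcover : 2 ^ (Fintype.card ι * Fintype.card κ) ≤
      ∑ p ∈ T, #(balanced p.1 p.2) ^ Fintype.card κ := by
    calc 2 ^ (Fintype.card ι * Fintype.card κ) = #(univ : Finset (κ → Finset ι)) := by
          simp [pow_mul]
      _ ≤ #(T.biUnion fun p => Fintype.piFinset fun _ : κ => balanced p.1 p.2) :=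
          card_le_card fun A _ => by
            obtain ⟨P, N, hPN, hne, hA⟩ := exists_balanced_of_not_injective (hbad A)
            exact mem_biUnion.mpr
              ⟨(P, N), mem_filter.mpr ⟨mem_univ _, hPN, hne⟩, Fintype.mem_piFinset.mpr hA⟩
      _ ≤ ∑ p ∈ T, #(balanced p.1 p.2) ^ Fintype.card κ := by
          grw [card_biUnion_le]; simp
  rw [← sum_filter_add_sum_filter_not T fun p => #(p.1 ∪ p.2) ≤ K] at hcover
  have hsum_small := four_mul_sum_pow_card_balanced_le_of_card_le
    {p ∈ T | #(p.1 ∪ p.2) ≤ K}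
    (fun p hp => by
      obtain ⟨hT, hK⟩ := mem_filter.mp hp
      exact ⟨(mem_filter.mp hT).2.1, (mem_filter.mp hT).2.2, hK⟩)
    hsmall
  have hsum_large := four_mul_sum_pow_card_balanced_le_of_lt_card
    {p ∈ T | ¬#(p.1 ∪ p.2) ≤ K}
    (fun p hp => by
      obtain ⟨hT, hK⟩ := mem_filter.mp hp
      exact ⟨(mem_filter.mp hT).2.1, not_le.mp hK⟩)
    hlarge
  have : 0 < 2 ^ (Fintype.card ι * Fintype.card κ) := by positivity
  omega

omit [Fintype ι] in
theorem weigh_singleton_injective : Function.Injective (weigh fun i : ι => ({i} : Finset ι)) := by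
  intro u v huv
  ext i
  have hi := congr_fun huv i
  by_cases hu : i ∈ u <;> by_cases hv : i ∈ v <;> simp_all [weigh]

end Weighing

theorem logb_div_le_uniformEntropy {α β : Type*} [Fintype α] [Nonempty α] [DecidableEq β]
    (f : α → β) {N : ℕ} (hN : ∀ y, #{a | f a = y} ≤ N) :
    logb 2 (Fintype.card α / N) ≤ uniformEntropy f := by
  set n : ℝ := (Fintype.card α : ℝ)
  have hn : 0 < n := by simp [n, Fintype.card_pos]
  set c : β → ℕ := fun y => #{a | f a = y}
  have hsum : ∑ y ∈ univ.image f, (c y : ℝ) / n = 1 := by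
    rw [← sum_div, ← Nat.cast_sum, ← card_eq_sum_card_image, card_univ, div_self hn.ne']
  have hterm : ∀ y ∈ univ.image f, c y / n * logb 2 (n / N) ≤ -(c y / n * logb 2 (c y / n)) := by
    intro y hy
    obtain ⟨a, -, rfl⟩ := mem_image.mp hy
    have hc : (0 : ℝ) < c (f a) := by exact_mod_cast card_pos.mpr ⟨a, by simp⟩
    have hcN : (c (f a) : ℝ) ≤ N := by exact_mod_cast hN _
    rw [← mul_neg, ← logb_inv, inv_div]
    refine mul_le_mul_of_nonneg_left ?_ (by positivity)
    exact logb_le_logb_of_le one_lt_two (div_pos hn (hc.trans_le hcN))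
      (div_le_div_of_nonneg_left hn.le hc hcN)
  calc logb 2 (n / N) = ∑ y ∈ univ.image f, c y / n * logb 2 (n / N) := by
        rw [← sum_mul, hsum, one_mul]
    _ ≤ ∑ y ∈ univ.image f, -(c y / n * logb 2 (c y / n)) := sum_le_sum hterm
    _ = uniformEntropy f := by rw [uniformEntropy, sum_neg_distrib]

theorem card_mul_logb_le_uniformEntropy {ι β γ : Type*} [Fintype ι] [DecidableEq ι] [Fintype β]
    [Nonempty β] [DecidableEq γ] (f : (ι → β) → γ) (s : Finset ι)
    (hf : ∀ u v, f u = f v → ∀ j ∈ s, u j = v j) :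
    #s * logb 2 (Fintype.card β) ≤ uniformEntropy f := by
  have hfiber : ∀ y, #{v | f v = y} ≤ Fintype.card β ^ (Fintype.card ι - #s) := by
    intro y
    calc #{v | f v = y} ≤ #(univ : Finset ((sᶜ : Finset ι) → β)) :=
          card_le_card_of_injOn (fun v j => v j) (fun _ _ => mem_univ _) fun u hu v hv huv => by
            simp only [coe_filter, mem_univ, true_and, Set.mem_ofPred_eq] at hu hv
            funext j
            by_cases hj : j ∈ s
            · exact hf u v (hu.trans hv.symm) j hj
            · exact congr_fun huv ⟨j, mem_compl.mpr hj⟩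
      _ = Fintype.card β ^ (Fintype.card ι - #s) := by simp
  have hpow : (Fintype.card β : ℝ) ^ Fintype.card ι =
      Fintype.card β ^ #s * Fintype.card β ^ (Fintype.card ι - #s) := by
    rw [← pow_add, Nat.add_sub_cancel' (card_le_univ s)]
  have := logb_div_le_uniformEntropy f hfiber
  rwa [Fintype.card_fun, Nat.cast_pow, Nat.cast_pow, hpow, mul_div_cancel_right₀ _ (by positivity),
    logb_pow] at this

def weighingMatrix {κ ι : Type*} [DecidableEq ι] (A : κ → Finset ι) : Matrix κ ι ℤ :=
  Matrix.of fun i j => if j ∈ A i then 1 else 0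

theorem weighingMatrix_eq_zero_or_one {κ ι : Type*} [DecidableEq ι] (A : κ → Finset ι) (i : κ)
    (j : ι) : weighingMatrix A i j = 0 ∨ weighingMatrix A i j = 1 := by
  by_cases hj : j ∈ A i <;> simp [weighingMatrix, hj]

theorem weighingMatrix_map_mulVec {κ ι ι' : Type*} [Fintype ι] [DecidableEq ι] [Fintype ι']
    [DecidableEq ι'] (A : κ → Finset ι) (e : ι ↪ ι') (v : ι' → Fin 2) :
    weighingMatrix (fun i => (A i).map e) *ᵥ (fun j => ((v j : ℕ) : ℤ)) =
      fun i => (weigh A {j | v (e j) = 1} i : ℤ) := by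
  ext i
  simp only [weighingMatrix, Matrix.mulVec, dotProduct, Matrix.of_apply, ite_mul, one_mul,
    zero_mul, sum_ite_mem, univ_inter, sum_map, weigh, inter_filter, inter_univ, card_filter,
    Nat.cast_sum]
  refine sum_congr rfl fun j _ => ?_
  generalize v (e j) = a
  fin_cases a <;> rfl

theorem card_le_uniformEntropy_weighingMatrix_map {κ ι ι' : Type*} [Fintype κ] [Fintype ι]
    [DecidableEq ι] [Fintype ι'] [DecidableEq ι'] {A : κ → Finset ι}
    (hA : Function.Injective (weigh A)) (e : ι ↪ ι') :
    (Fintype.card ι : ℝ) ≤ uniformEntropy fun v : ι' → Fin 2 =>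
      weighingMatrix (fun i => (A i).map e) *ᵥ fun j => ((v j : ℕ) : ℤ) := by
  have key := card_mul_logb_le_uniformEntropy (β := Fin 2) (fun v : ι' → Fin 2 =>
      weighingMatrix (fun i => (A i).map e) *ᵥ fun j => ((v j : ℕ) : ℤ)) (univ.map e) ?_
  · simpa using key
  intro u v huv j hj
  obtain ⟨j, -, rfl⟩ := mem_map.mp hj
  simp only [weighingMatrix_map_mulVec] at huv
  have hS := hA (funext fun i => by exact_mod_cast congr_fun huv i)
  have hj : u (e j) = 1 ↔ v (e j) = 1 := by simpa using congr_arg (j ∈ ·) hS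
  exact (by decide : ∀ a b : Fin 2, (a = 1 ↔ b = 1) → a = b) _ _ hj

theorem two_pow_le_pow_iff_le_mul_logb {a b n : ℕ} (ha : 0 < a) :
    2 ^ b ≤ a ^ n ↔ (b : ℝ) ≤ n * logb 2 a := by
  rw [← Nat.cast_le (α := ℝ), ← logb_le_logb one_lt_two (by positivity) (by positivity)]
  simp [logb_pow]

theorem pow_le_two_pow_iff_mul_logb_le {a b n : ℕ} (ha : 0 < a) :
    a ^ n ≤ 2 ^ b ↔ n * logb 2 a ≤ b := by
  rw [← Nat.cast_le (α := ℝ), ← logb_le_logb one_lt_two (by positivity) (by positivity)]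
  simp [logb_pow]

theorem logb_pow_four_le {t : ℝ} (ht : 0 < t) : logb 2 (t ^ 4) ≤ 6 * t := by
  rw [logb_pow, logb, ← mul_div_assoc, div_le_iff₀ (log_pos one_lt_two)]
  push_cast
  nlinarith [log_le_sub_one_of_pos ht, log_two_gt_d9]

theorem four_mul_succ_pow_le_two_pow {h m K : ℕ} {t : ℝ} (ht : 64 ≤ t) (hh : (h : ℝ) = t ^ 4)
    (hK : (K : ℝ) ≤ t ^ 2) (hm : (m : ℝ) ≤ h * logb 2 h / 100) :
    4 * (m + 1) ^ (2 * K) ≤ 2 ^ h := by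
  have ht3 := pow_le_pow_left₀ (by norm_num) ht 3
  have hL : logb 2 h ≤ 6 * t := hh ▸ logb_pow_four_le (by linarith)
  have hL0 : 0 ≤ logb 2 h := logb_nonneg one_lt_two (by rw [hh]; nlinarith)
  have hLh : logb 2 h ≤ h := by rw [hh] at hL ⊢; nlinarith
  have hh2r : (2 : ℝ) ≤ h := by rw [hh]; nlinarith
  have hh2 : 2 ≤ h := by exact_mod_cast hh2r
  have hm2 : m + 1 ≤ h ^ 2 := by
    have := mul_le_mul_of_nonneg_left hLh (Nat.cast_nonneg h)
    have h4 : (4 : ℝ) ≤ h ^ 2 := by nlinarith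
    have : (m : ℝ) + 1 ≤ h ^ 2 := by rw [sq] at h4 ⊢; linarith
    exact_mod_cast this
  have hexp : h ^ (4 * K) ≤ 2 ^ (h - 2) := by
    rw [pow_le_two_pow_iff_mul_logb_le (by omega), Nat.cast_sub hh2]
    have : (K : ℝ) * logb 2 h ≤ t ^ 2 * (6 * t) := mul_le_mul hK hL hL0 (by positivity)
    push_cast
    nlinarith
  calc 4 * (m + 1) ^ (2 * K) ≤ 2 ^ 2 * (h ^ 2) ^ (2 * K) := by gcongr; norm_num
    _ = 2 ^ 2 * h ^ (4 * K) := by ring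
    _ ≤ 2 ^ 2 * 2 ^ (h - 2) := by gcongr
    _ = 2 ^ h := by rw [← pow_add]; congr 1; omega

theorem sixteen_mul_pow_mul_four_pow_le {h m K : ℕ} (hL : 24 ≤ logb 2 h) (hK : h ≤ (K + 2) ^ 2)
    (hm : (m : ℝ) ≤ h * logb 2 h / 100) :
    16 * 16 ^ m * 4 ^ h ≤ (K + 2) ^ h := by
  have hpos : 0 < h := Nat.pos_of_ne_zero fun h0 => by norm_num [h0] at hL
  have hh : (1 : ℝ) ≤ h := by exact_mod_cast hpos
  refine (Nat.pow_le_pow_iff_left two_ne_zero).mp ?_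
  calc (16 * 16 ^ m * 4 ^ h) ^ 2 = 2 ^ (8 + 8 * m + 4 * h) := by
        rw [show (16 : ℕ) = 2 ^ 4 by rfl, show (4 : ℕ) = 2 ^ 2 by rfl, ← pow_mul, ← pow_mul,
          ← pow_add, ← pow_add, ← pow_mul]
        ring_nf
    _ ≤ h ^ h := by
        rw [two_pow_le_pow_iff_le_mul_logb hpos]
        push_cast
        nlinarith [mul_le_mul_of_nonneg_left hL (by positivity : (0 : ℝ) ≤ h)]
    _ ≤ ((K + 2) ^ 2) ^ h := by gcongr
    _ = ((K + 2) ^ h) ^ 2 := by rw [← pow_mul, ← pow_mul, mul_comm]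

theorem exists_injective_weigh_of_le_logb {h : ℕ} (hL : 24 ≤ logb 2 h) :
    ∃ A : Fin h → Finset (Fin ⌊h * logb 2 h / 100⌋₊), Function.Injective (weigh A) := by
  have hpos : (0 : ℝ) < h := by
    rcases Nat.eq_zero_or_pos h with h0 | h0
    · norm_num [h0] at hL
    · exact_mod_cast h0
  set t := √√(h : ℝ)
  have ht4 : (h : ℝ) = t ^ 4 := by
    rw [show t ^ 4 = (t ^ 2) ^ 2 by ring, sq_sqrt (sqrt_nonneg _), sq_sqrt hpos.le]
  have ht : 64 ≤ t := by
    have h24 := (le_logb_iff_rpow_le one_lt_two hpos).mp hL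
    refine (pow_le_pow_iff_left₀ (by norm_num) (by positivity) (by norm_num : 4 ≠ 0)).mp ?_
    rw [← ht4]
    norm_num at h24 ⊢
    exact h24
  have hK : (Nat.sqrt h : ℝ) ≤ t ^ 2 := by
    rw [sq_sqrt (sqrt_nonneg _)]
    exact Real.nat_sqrt_le_real_sqrt
  have hm := Nat.floor_le (by positivity : 0 ≤ h * logb 2 h / 100)
  apply exists_injective_weigh (Nat.sqrt h) <;> simp only [Fintype.card_fin]
  · exact four_mul_succ_pow_le_two_pow ht ht4 hK hm
  · exact sixteen_mul_pow_mul_four_pow_le hL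
      ((Nat.lt_succ_sqrt' h).le.trans (Nat.pow_le_pow_left (by omega) 2)) hm

theorem exists_injective_weigh_of_two_le {h : ℕ} (hh : 2 ≤ h) :
    ∃ m : ℕ, h * logb 2 h / 200 ≤ m ∧ m ≤ ⌊h * logb 2 h⌋₊ ∧
      ∃ A : Fin h → Finset (Fin m), Function.Injective (weigh A) := by
  have hh' : (2 : ℝ) ≤ h := by exact_mod_cast hh
  have hL1 : 1 ≤ logb 2 h := (le_logb_iff_rpow_le one_lt_two (by positivity)).mpr (by simpa)
  by_cases hL : logb 2 h < 24
  · exact ⟨h, by nlinarith, Nat.le_floor (by nlinarith), fun i => {i},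
      weigh_singleton_injective⟩
  · push Not at hL
    set x := h * logb 2 h / 100 with hx_def
    have hx : 1 ≤ x := by
      have h24 : (2 : ℝ) ^ (24 : ℝ) ≤ h := (le_logb_iff_rpow_le one_lt_two (by positivity)).mp hL
      rw [hx_def]
      nlinarith [show (2 : ℝ) ^ (24 : ℝ) = 16777216 by norm_num]
    refine ⟨⌊x⌋₊, ?_, Nat.floor_le_floor (div_le_self (by positivity) (by norm_num)),
      exists_injective_weigh_of_le_logb hL⟩
    have h1 : (1 : ℝ) ≤ ⌊x⌋₊ := by exact_mod_cast Nat.le_floor (by simpa using hx)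
    have hx2 : h * logb 2 h / 200 = x / 2 := by rw [hx_def]; ring
    linarith [Nat.lt_floor_add_one x]

/-- Erdős–Spencer style: there exist constants `0 < α ≤ 1`, `0 < γ ≤ 1`
such that for every `h ≥ 2` there is a 0-1 matrix `M` of height `h` and width
`α·h·log₂ h` with `H(Mv) ≥ γ·h·log₂ h` for `v` uniform on `{0,1}^{α·h·log₂ h}`. -/
theorem stmt7 : ∃ α γ : ℝ, 0 < α ∧ α ≤ 1 ∧ 0 < γ ∧ γ ≤ 1 ∧
    ∀ h : ℕ, 2 ≤ h →
      ∃ M : Matrix (Fin h) (Fin ⌊α * h * Real.logb 2 h⌋₊) ℤ,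
        (∀ i j, M i j = 0 ∨ M i j = 1) ∧
        γ * h * Real.logb 2 h ≤
          uniformEntropy (fun v : Fin ⌊α * h * Real.logb 2 h⌋₊ → Fin 2 =>
            M.mulVec fun j => ((v j : ℕ) : ℤ)) := by
  refine ⟨1, 1 / 200, by norm_num, le_rfl, by norm_num, by norm_num, fun h hh => ?_⟩
  obtain ⟨m, hm, hmw, A, hA⟩ := exists_injective_weigh_of_two_le hh
  refine ⟨weighingMatrix fun i => (A i).map (Fin.castLEEmb (hmw.trans_eq (by rw [one_mul]))),
    fun i j => weighingMatrix_eq_zero_or_one _ i j, ?_⟩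
  calc 1 / 200 * h * logb 2 h = h * logb 2 h / 200 := by ring
    _ ≤ Fintype.card (Fin m) := by simpa using hm
    _ ≤ _ := card_le_uniformEntropy_weighingMatrix_map hA _
end

section
/- Optimal rearrangement structure: For binary strings S₁, S₂ of length n with equal numbers of ones, the permutation π minimizing Σ_j |j − π(j)|² subject to S₁[π(j)] = S₂[j] for all j is the one that maps the k-th one of S₂ (in left-to-right order) to the k-th one of S₁, and the k-th zero of S₂ to the k-th zero of S₁. -/
/-- Cost of a rearrangement permutation: `Σ_j |j - π(j)|²`. -/
def L2cost (n : ℕ) (π : Equiv.Perm (Fin n)) : ℕ :=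
  ∑ j : Fin n, (((j : ℤ) - ((π j : ℕ) : ℤ)).natAbs) ^ 2

/-!
Expanding the square, `Σ_j (j - π j)² = 2 Σ_j j² - 2 Σ_j j · π j`, so a rearrangement of
minimal cost is one maximising `Σ_j j · π j`. Every valid `π` is `σ ∘ τ` with `τ = σ⁻¹ π`
preserving the letters of `S₂`, and on each letter class the maps `j ↦ j` and `j ↦ σ j` are
increasing together; the rearrangement inequality, applied class by class, gives the bound.
-/

open Finset Equiv

theorem sum_mul_comp_perm_le_sum_mul_of_monovaryOn_fibers {ι κ α : Type*} [Fintype ι]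
    [DecidableEq κ] [Semiring α] [LinearOrder α] [IsStrictOrderedRing α] [ExistsAddOfLE α]
    {f g : ι → α} {c : ι → κ} {τ : Perm ι} (hfg : ∀ k, MonovaryOn f g {i | c i = k})
    (hτ : ∀ i, c (τ i) = c i) :
    ∑ i, f i * g (τ i) ≤ ∑ i, f i * g i := by
  rw [← sum_fiberwise_of_maps_to (fun i _ ↦ mem_image_of_mem c (mem_univ i)),
    ← sum_fiberwise_of_maps_to (g := c) (fun i _ ↦ mem_image_of_mem c (mem_univ i))]
  refine sum_le_sum fun k _ ↦ ?_
  let τk : Perm ι := Perm.ofSubtype (τ.subtypePerm (p := fun i ↦ c i = k) (by simp [hτ]))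
  have hτk : ∀ i, c i = k → τk i = τ i := fun i hi ↦ Perm.ofSubtype_subtypePerm_of_mem _ hi
  calc ∑ i ∈ univ with c i = k, f i * g (τ i)
      = ∑ i ∈ univ with c i = k, f i * g (τk i) :=
        sum_congr rfl fun i hi ↦ by rw [hτk i (mem_filter.1 hi).2]
    _ ≤ ∑ i ∈ univ with c i = k, f i * g i := by
      refine MonovaryOn.sum_mul_comp_perm_le_sum_mul (by simpa using hfg k) fun i hi ↦ ?_
      by_contra hik
      exact hi (Perm.ofSubtype_subtypePerm_of_not_mem _ (by simpa using hik))

theorem natCast_L2cost (n : ℕ) (π : Perm (Fin n)) :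
    (L2cost n π : ℤ) = 2 * ∑ j : Fin n, (j : ℤ) ^ 2 - 2 * ∑ j : Fin n, (j : ℤ) * (π j : ℤ) := by
  have hperm : ∑ j : Fin n, ((π j : ℕ) : ℤ) ^ 2 = ∑ j : Fin n, (j : ℤ) ^ 2 :=
    Equiv.sum_comp π fun j : Fin n ↦ (j : ℤ) ^ 2
  calc (L2cost n π : ℤ) = ∑ j : Fin n, ((j : ℤ) - (π j : ℤ)) ^ 2 := by simp [L2cost]
    _ = ∑ j : Fin n, (j : ℤ) ^ 2 + ∑ j : Fin n, ((π j : ℕ) : ℤ) ^ 2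
          - 2 * ∑ j : Fin n, (j : ℤ) * (π j : ℤ) := by
      rw [mul_sum, ← sum_add_distrib, ← sum_sub_distrib]
      exact sum_congr rfl fun j _ ↦ by ring
    _ = _ := by rw [hperm]; ring

theorem L2cost_le_L2cost_iff {n : ℕ} {σ π : Perm (Fin n)} :
    L2cost n σ ≤ L2cost n π ↔
      ∑ j : Fin n, (j : ℤ) * (π j : ℤ) ≤ ∑ j : Fin n, (j : ℤ) * (σ j : ℤ) := by
  rw [← Nat.cast_le (α := ℤ), natCast_L2cost, natCast_L2cost]
  constructor <;> intro h <;> linarith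

theorem stmt11_general (n : ℕ) (S₁ S₂ : Fin n → Fin 2)
    (σ : Equiv.Perm (Fin n)) (hσ : ∀ j, S₁ (σ j) = S₂ j)
    (hmono : ∀ j j', S₂ j = S₂ j' → j ≤ j' → σ j ≤ σ j')
    (π : Equiv.Perm (Fin n)) (hπ : ∀ j, S₁ (π j) = S₂ j) :
    L2cost n σ ≤ L2cost n π := by
  have hclass : ∀ j, S₂ ((σ⁻¹ * π) j) = S₂ j := fun j ↦ by
    rw [← hσ, ← hπ]
    simp
  have hmonovary :
      ∀ k, MonovaryOn (fun j : Fin n ↦ (j : ℤ)) (fun j ↦ (σ j : ℤ)) {j | S₂ j = k} := by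
    rintro k i (hi : S₂ i = k) j (hj : S₂ j = k) hij
    by_contra! hji
    exact (hmono j i (hj.trans hi.symm) (by exact_mod_cast hji.le)).not_gt (by simpa using hij)
  rw [L2cost_le_L2cost_iff]
  simpa using sum_mul_comp_perm_le_sum_mul_of_monovaryOn_fibers hmonovary hclass

/-- optimal rearrangement structure, Lemma 3.1 of Amir et al.: for binary
strings `S₁, S₂` of length `n` with equal numbers of ones, the order-preserving matching
`σ` (a valid rearrangement that maps the k-th one of `S₂` to the k-th one of `S₁`, and
k-th zero to k-th zero, i.e. is monotone on each value class) minimizes `Σ_j |j - π(j)|²`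
over all valid rearrangement permutations `π`. -/
theorem stmt11 (n : ℕ) (S₁ S₂ : Fin n → Fin 2)
    (hones : (Finset.univ.filter fun j => S₁ j = 1).card =
      (Finset.univ.filter fun j => S₂ j = 1).card)
    (σ : Equiv.Perm (Fin n)) (hσ : ∀ j, S₁ (σ j) = S₂ j)
    (hmono : ∀ j j', S₂ j = S₂ j' → j ≤ j' → σ j ≤ σ j')
    (π : Equiv.Perm (Fin n)) (hπ : ∀ j, S₁ (π j) = S₂ j) :
    L2cost n σ ≤ L2cost n π :=
  stmt11_general n S₁ S₂ σ hσ hmono π hπ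
end
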